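/- arXiv:2503.06266 — 6 statements merged into one kernel-verified Lean document; each statement's English description precedes it below -/
import Mathlib

section
/- Let 𝒳 be a family of cuts of V, and let A and B be two cuts belonging to 𝒳 whose capacity is minimum among all cuts in 𝒳 (i.e., c(A) ≤ c(X) and c(B) ≤ c(X) for every X ∈ 𝒳). If the sets A ∩ B and A ∪ B also define cuts belonging to 𝒳, then A ∩ B and A ∪ B are also minimum-capacity cuts in 𝒳 (c(A ∩ B) ≤ c(X) and c(A ∪ B) ≤ c(X) for every X ∈ 𝒳). -/
open Finset

/-- Capacity of the cut defined by `A`: number of edges with one endpoint in `A`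
and the other outside `A`. -/
def cap {V : Type*} [Fintype V] [DecidableEq V] (w : V → V → ℕ) (A : Finset V) : ℕ :=
  ∑ a ∈ A, ∑ b ∈ Aᶜ, w a b

/-- A cut of `V` is a subset `A` with `∅ ≠ A ≠ V`. -/
def IsCut {V : Type*} [Fintype V] (A : Finset V) : Prop :=
  A ≠ ∅ ∧ A ≠ Finset.univ

/-- An `S`-cut is a cut that divides `S`. -/
def IsSCut {V : Type*} [Fintype V] [DecidableEq V] (S A : Finset V) : Prop :=
  IsCut A ∧ (A ∩ S).Nonempty ∧ (S \ A).Nonempty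

/-- An `S`-mincut is an `S`-cut of minimum capacity among all `S`-cuts. -/
def IsSMincut {V : Type*} [Fintype V] [DecidableEq V] (w : V → V → ℕ) (S A : Finset V) : Prop :=
  IsSCut S A ∧ ∀ B : Finset V, IsSCut S B → cap w A ≤ cap w B

/-- `T ⊆ S` is a valid cut of `S` if some `S`-mincut `A` satisfies `A ∩ S = T`. -/
def IsValidCut {V : Type*} [Fintype V] [DecidableEq V] (w : V → V → ℕ) (S T : Finset V) : Prop :=
  ∃ A : Finset V, IsSMincut w S A ∧ A ∩ S = T

/-- A tight mincut for a valid cut `T` of `S`. -/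
def IsTightMincut {V : Type*} [Fintype V] [DecidableEq V] (w : V → V → ℕ)
    (S T N : Finset V) : Prop :=
  IsSMincut w S N ∧ N ∩ S = T ∧ ∀ A : Finset V, IsSMincut w S A → A ∩ S = T → N ⊆ A

/-- A loose mincut for a valid cut `T` of `S`. -/
def IsLooseMincut {V : Type*} [Fintype V] [DecidableEq V] (w : V → V → ℕ)
    (S T F : Finset V) : Prop :=
  IsSMincut w S F ∧ F ∩ S = T ∧ ∀ A : Finset V, IsSMincut w S A → A ∩ S = T → A ⊆ F


lemma cap_eq {V : Type*} [Fintype V] [DecidableEq V] (w : V → V → ℕ) (X : Finset V) :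
    cap w X = ∑ u : V, ∑ v : V, if u ∈ X ∧ v ∉ X then w u v else 0 := by
  unfold cap
  rw [← Finset.sum_filter_add_sum_filter_not Finset.univ (· ∈ X)]
  have h1 : ∀ u : V, (∑ v : V, if u ∈ X ∧ v ∉ X then w u v else 0) =
      if u ∈ X then ∑ v ∈ Xᶜ, w u v else 0 := by
    intro u
    by_cases hu : u ∈ X
    · simp only [hu, true_and, if_true]
      rw [← Finset.sum_filter]
      congr 1
      ext v
      simp [Finset.mem_filter, Finset.mem_compl]
    · simp [hu]
  simp only [h1]
  rw [Finset.sum_filter_of_ne (by intro x _ h; by_contra hx; simp [hx] at h)]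
  simp [Finset.sum_ite_of_false, Finset.filter_mem_eq_inter]

lemma cap_submodular {V : Type*} [Fintype V] [DecidableEq V] (w : V → V → ℕ)
    (A B : Finset V) :
    cap w (A ∩ B) + cap w (A ∪ B) ≤ cap w A + cap w B := by
  simp only [cap_eq, ← Finset.sum_add_distrib]
  apply Finset.sum_le_sum
  intro u _
  apply Finset.sum_le_sum
  intro v _
  by_cases h1 : u ∈ A <;> by_cases h2 : u ∈ B <;> by_cases h3 : v ∈ A <;>
    by_cases h4 : v ∈ B <;>
    simp [h1, h2, h3, h4, Finset.mem_inter, Finset.mem_union]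

/-- Sub-modularity of cuts: if `A` and `B` are minimum cuts in a family `𝒳` of cuts,
and `A ∩ B` and `A ∪ B` also belong to `𝒳`, then `A ∩ B` and `A ∪ B` are also
minimum cuts in `𝒳`. -/
theorem submodularity_of_cuts {V : Type*} [Fintype V] [DecidableEq V]
    (w : V → V → ℕ) (hsymm : ∀ u v : V, w u v = w v u) (hloop : ∀ v : V, w v v = 0)
    (𝒳 : Set (Finset V)) (h𝒳 : ∀ X ∈ 𝒳, IsCut X)
    (A B : Finset V) (hA : A ∈ 𝒳) (hB : B ∈ 𝒳)
    (hAmin : ∀ X ∈ 𝒳, cap w A ≤ cap w X)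
    (hBmin : ∀ X ∈ 𝒳, cap w B ≤ cap w X)
    (hI : A ∩ B ∈ 𝒳) (hU : A ∪ B ∈ 𝒳) :
    (∀ X ∈ 𝒳, cap w (A ∩ B) ≤ cap w X) ∧ (∀ X ∈ 𝒳, cap w (A ∪ B) ≤ cap w X) := by
  have key := cap_submodular w A B
  have h1 := hAmin _ hI
  have h2 := hBmin _ hU
  constructor
  · intro X hX
    have := hAmin X hX
    omega
  · intro X hX
    have := hBmin X hX
    omega
end

section
/- For any three subsets C₁, C₂, C₃ ⊆ V, c(C₁) + c(C₂) + c(C₃) ≥ c(C₁ ∩ C₂ᶜ ∩ C₃ᶜ) + c(C₁ᶜ ∩ C₂ ∩ C₃ᶜ) + c(C₁ᶜ ∩ C₂ᶜ ∩ C₃) + c(C₁ ∩ C₂ ∩ C₃), where Xᶜ denotes V \ X. -/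
open Finset

lemma two_cap {V : Type*} [Fintype V] [DecidableEq V] (w : V → V → ℕ)
    (hsymm : ∀ u v : V, w u v = w v u) (A : Finset V) :
    2 * cap w A = ∑ u : V, ∑ v : V, if (u ∈ A) ↔ (v ∈ A) then 0 else w u v := by
  have h1 : cap w A = ∑ u : V, ∑ v : V, if u ∈ A ∧ v ∉ A then w u v else 0 := by
    unfold cap
    symm
    calc ∑ u : V, ∑ v : V, (if u ∈ A ∧ v ∉ A then w u v else 0)
        = ∑ u : V, if u ∈ A then (∑ v : V, if v ∈ Aᶜ then w u v else 0) else 0 := by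
          refine Finset.sum_congr rfl fun u _ => ?_
          by_cases hu : u ∈ A <;> simp [hu, Finset.mem_compl]
      _ = ∑ u ∈ Finset.univ ∩ A, ∑ v : V, if v ∈ Aᶜ then w u v else 0 :=
          Finset.sum_ite_mem _ _ _
      _ = ∑ u ∈ A, ∑ v ∈ Finset.univ ∩ Aᶜ, w u v := by
          rw [Finset.univ_inter]
          exact Finset.sum_congr rfl fun u _ => Finset.sum_ite_mem _ _ _
      _ = ∑ u ∈ A, ∑ v ∈ Aᶜ, w u v := by rw [Finset.univ_inter]
  have h2 : cap w A = ∑ u : V, ∑ v : V, if v ∈ A ∧ u ∉ A then w u v else 0 := by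
    rw [h1, Finset.sum_comm]
    refine Finset.sum_congr rfl fun u _ => Finset.sum_congr rfl fun v _ => ?_
    rw [hsymm u v]
  rw [two_mul]
  nth_rewrite 1 [h1]
  nth_rewrite 1 [h2]
  rw [← Finset.sum_add_distrib]
  refine Finset.sum_congr rfl fun u _ => ?_
  rw [← Finset.sum_add_distrib]
  refine Finset.sum_congr rfl fun v _ => ?_
  by_cases hu : u ∈ A <;> by_cases hv : v ∈ A <;> simp [hu, hv]

/-- Generalized sub-modularity (Problem 6.48(iii) in Lovász): for any three subsets
`C₁, C₂, C₃` of `V`,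
`c(C₁) + c(C₂) + c(C₃) ≥ c(C₁ ∩ C₂ᶜ ∩ C₃ᶜ) + c(C₁ᶜ ∩ C₂ ∩ C₃ᶜ) + c(C₁ᶜ ∩ C₂ᶜ ∩ C₃) + c(C₁ ∩ C₂ ∩ C₃)`. -/
theorem three_star_inequality {V : Type*} [Fintype V] [DecidableEq V]
    (w : V → V → ℕ) (hsymm : ∀ u v : V, w u v = w v u) (hloop : ∀ v : V, w v v = 0)
    (C₁ C₂ C₃ : Finset V) :
    cap w (C₁ ∩ C₂ᶜ ∩ C₃ᶜ) + cap w (C₁ᶜ ∩ C₂ ∩ C₃ᶜ) + cap w (C₁ᶜ ∩ C₂ᶜ ∩ C₃)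
      + cap w (C₁ ∩ C₂ ∩ C₃)
      ≤ cap w C₁ + cap w C₂ + cap w C₃ := by
  have key : 2 * (cap w (C₁ ∩ C₂ᶜ ∩ C₃ᶜ) + cap w (C₁ᶜ ∩ C₂ ∩ C₃ᶜ) + cap w (C₁ᶜ ∩ C₂ᶜ ∩ C₃)
      + cap w (C₁ ∩ C₂ ∩ C₃)) ≤ 2 * (cap w C₁ + cap w C₂ + cap w C₃) := by
    simp only [Nat.mul_add, two_cap w hsymm]
    simp only [← Finset.sum_add_distrib]
    refine Finset.sum_le_sum fun u _ => ?_
    refine Finset.sum_le_sum fun v _ => ?_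
    by_cases h1 : u ∈ C₁ <;> by_cases h2 : u ∈ C₂ <;> by_cases h3 : u ∈ C₃ <;>
      by_cases h4 : v ∈ C₁ <;> by_cases h5 : v ∈ C₂ <;> by_cases h6 : v ∈ C₃ <;>
      simp [h1, h2, h3, h4, h5, h6]
  omega
end

section
/- For any two distinct vertices s, t ∈ V, there exists a unique (s,t)-mincut N such that N ⊆ A for every (s,t)-mincut A (the tight mincut from s to t), and there exists a unique (s,t)-mincut F such that A ⊆ F for every (s,t)-mincut A (the loose mincut from s to t). -/
open Finset

/-- An `(s,t)`-cut is a subset containing `s` but not `t`. -/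
def IsSTCut {V : Type*} (s t : V) (A : Finset V) : Prop := s ∈ A ∧ t ∉ A

/-- An `(s,t)`-mincut is an `(s,t)`-cut of minimum capacity. -/
def IsSTMincut {V : Type*} [Fintype V] [DecidableEq V] (w : V → V → ℕ)
    (s t : V) (A : Finset V) : Prop :=
  IsSTCut s t A ∧ ∀ B : Finset V, IsSTCut s t B → cap w A ≤ cap w B

/-!
The cut function is submodular, `c(A ∩ B) + c(A ∪ B) ≤ c(A) + c(B)`, for any edge weights.
If `A` and `B` are `(s,t)`-mincuts of capacity `λ`, then `A ∩ B` and `A ∪ B` are `(s,t)`-cuts,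
so both have capacity at least `λ`, and submodularity forces both to equal `λ`. Hence the
`(s,t)`-mincuts form a finite, nonempty family closed under `∩` and `∪`: the intersection of
all of them is the least one and the union of all of them is the greatest one.
-/

section Lattice

variable {α : Type*}

theorem InfClosed.exists_isLeast_of_finite [SemilatticeInf α] {s : Set α} (hs : InfClosed s)
    (hfin : s.Finite) (hne : s.Nonempty) : ∃ a, IsLeast s a := by
  have hne' : hfin.toFinset.Nonempty := hfin.toFinset_nonempty.2 hne
  refine ⟨hfin.toFinset.inf' hne' id, hs.finsetInf'_mem hne' fun a ha => ?_, fun a ha => ?_⟩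
  · exact hfin.mem_toFinset.1 ha
  · exact Finset.inf'_le id (hfin.mem_toFinset.2 ha)

theorem SupClosed.exists_isGreatest_of_finite [SemilatticeSup α] {s : Set α} (hs : SupClosed s)
    (hfin : s.Finite) (hne : s.Nonempty) : ∃ a, IsGreatest s a := by
  have hne' : hfin.toFinset.Nonempty := hfin.toFinset_nonempty.2 hne
  refine ⟨hfin.toFinset.sup' hne' id, hs.finsetSup'_mem hne' fun a ha => ?_, fun a ha => ?_⟩
  · exact hfin.mem_toFinset.1 ha
  · exact Finset.le_sup' id (hfin.mem_toFinset.2 ha)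

end Lattice

section Cut

variable {V : Type*}

section STCut

variable [DecidableEq V] {s t : V} {A B : Finset V}

theorem IsSTCut.inter (hA : IsSTCut s t A) (hB : IsSTCut s t B) : IsSTCut s t (A ∩ B) :=
  ⟨Finset.mem_inter.2 ⟨hA.1, hB.1⟩, fun h => hA.2 (Finset.mem_inter.1 h).1⟩

theorem IsSTCut.union (hA : IsSTCut s t A) (hB : IsSTCut s t B) : IsSTCut s t (A ∪ B) :=
  ⟨Finset.mem_union_left _ hA.1, fun h => (Finset.mem_union.1 h).elim hA.2 hB.2⟩

end STCut

variable [Fintype V] [DecidableEq V] (w : V → V → ℕ)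

theorem cap_eq_sum_ite (A : Finset V) :
    cap w A = ∑ u, ∑ v, if u ∈ A ∧ v ∉ A then w u v else 0 := by
  simp only [cap, ← Finset.mem_compl, ite_and, Finset.sum_ite_irrel, Finset.sum_const_zero,
    Finset.sum_ite_mem, Finset.univ_inter]

theorem cap_inter_add_cap_union_le (A B : Finset V) :
    cap w (A ∩ B) + cap w (A ∪ B) ≤ cap w A + cap w B := by
  simp only [cap_eq_sum_ite, ← Finset.sum_add_distrib]
  refine Finset.sum_le_sum fun u _ => Finset.sum_le_sum fun v _ => ?_
  by_cases u ∈ A <;> by_cases v ∈ A <;> by_cases u ∈ B <;> by_cases v ∈ B <;> simp [*]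

variable {w} {s t : V} {A B : Finset V}

theorem IsSTMincut.of_cap_le (hA : IsSTMincut w s t A) (hB : IsSTCut s t B)
    (hle : cap w B ≤ cap w A) : IsSTMincut w s t B :=
  ⟨hB, fun C hC => hle.trans (hA.2 C hC)⟩

theorem IsSTMincut.inter_and_union (hA : IsSTMincut w s t A) (hB : IsSTMincut w s t B) :
    IsSTMincut w s t (A ∩ B) ∧ IsSTMincut w s t (A ∪ B) := by
  have hinter := hA.2 _ (hA.1.inter hB.1)
  have hunion := hA.2 _ (hA.1.union hB.1)
  have hAB := hB.2 _ hA.1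
  have hsub := cap_inter_add_cap_union_le w A B
  exact ⟨hA.of_cap_le (hA.1.inter hB.1) (by omega), hA.of_cap_le (hA.1.union hB.1) (by omega)⟩

theorem infClosed_isSTMincut : InfClosed {A : Finset V | IsSTMincut w s t A} :=
  fun _ hA _ hB => (IsSTMincut.inter_and_union hA hB).1

theorem supClosed_isSTMincut : SupClosed {A : Finset V | IsSTMincut w s t A} :=
  fun _ hA _ hB => (IsSTMincut.inter_and_union hA hB).2

variable (w) in
theorem exists_isSTMincut (hst : s ≠ t) : ∃ A : Finset V, IsSTMincut w s t A :=
  Set.exists_min_image {A | IsSTCut s t A} (cap w) (Set.toFinite _)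
    ⟨{s}, Finset.mem_singleton_self s, by simpa using hst.symm⟩

end Cut

theorem tight_loose_st_mincut_exists_unique_general {V : Type*} [Fintype V] [DecidableEq V]
    (w : V → V → ℕ) (s t : V) (hst : s ≠ t) :
    (∃! N : Finset V, IsSTMincut w s t N ∧ ∀ A : Finset V, IsSTMincut w s t A → N ⊆ A) ∧
    (∃! F : Finset V, IsSTMincut w s t F ∧ ∀ A : Finset V, IsSTMincut w s t A → A ⊆ F) := by
  have hne := exists_isSTMincut w hst
  obtain ⟨N, hN⟩ := infClosed_isSTMincut.exists_isLeast_of_finite (Set.toFinite _) hne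
  obtain ⟨F, hF⟩ := supClosed_isSTMincut.exists_isGreatest_of_finite (Set.toFinite _) hne
  exact ⟨⟨N, hN, fun _ h => hN.unique h |>.symm⟩, ⟨F, hF, fun _ h => hF.unique h |>.symm⟩⟩

/-- The tight and loose mincuts from `s` to `t` exist and are unique:
there is a unique `(s,t)`-mincut contained in all `(s,t)`-mincuts, and a unique
`(s,t)`-mincut containing all `(s,t)`-mincuts. -/
theorem tight_loose_st_mincut_exists_unique {V : Type*} [Fintype V] [DecidableEq V]
    (w : V → V → ℕ) (hsymm : ∀ u v : V, w u v = w v u) (hloop : ∀ v : V, w v v = 0)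
    (s t : V) (hst : s ≠ t) :
    (∃! N : Finset V, IsSTMincut w s t N ∧ ∀ A : Finset V, IsSTMincut w s t A → N ⊆ A) ∧
    (∃! F : Finset V, IsSTMincut w s t F ∧ ∀ A : Finset V, IsSTMincut w s t A → A ⊆ F) :=
  tight_loose_st_mincut_exists_unique_general w s t hst
end

section
/- Let A and A' be any two (s,t)-mincuts. Then there is no edge between A \ A' and A' \ A; that is, w a b = 0 for every a ∈ A \ A' and b ∈ A' \ A. -/
open Finset

lemma cap_eq_sum {V : Type*} [Fintype V] [DecidableEq V] (w : V → V → ℕ) (X : Finset V) :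
    cap w X = ∑ a : V, ∑ b : V, if a ∈ X ∧ b ∉ X then w a b else 0 := by
  rw [cap]
  calc ∑ a ∈ X, ∑ b ∈ Xᶜ, w a b
      = ∑ a : V, if a ∈ X then ∑ b ∈ Xᶜ, w a b else 0 := by
        rw [← Finset.univ_inter X]
        rw [← Finset.sum_ite_mem]
        simp
    _ = ∑ a : V, ∑ b : V, if a ∈ X ∧ b ∉ X then w a b else 0 := by
        refine Finset.sum_congr rfl fun a _ => ?_
        by_cases h : a ∈ X
        · simp only [h, true_and, if_true]
          rw [← Finset.sum_filter]
          congr 1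
          ext b; simp
        · simp [h]

/-- If `A` and `A'` are two `(s,t)`-mincuts, there is no edge between
`A \ A'` and `A' \ A`. -/
theorem no_edge_between_corner_sets {V : Type*} [Fintype V] [DecidableEq V]
    (w : V → V → ℕ) (hsymm : ∀ u v : V, w u v = w v u) (hloop : ∀ v : V, w v v = 0)
    (s t : V) (hst : s ≠ t)
    (A A' : Finset V) (hA : IsSTMincut w s t A) (hA' : IsSTMincut w s t A') :
    ∀ a ∈ A \ A', ∀ b ∈ A' \ A, w a b = 0 := by
  set C : ℕ := ∑ a : V, ∑ b : V, if a ∈ A \ A' ∧ b ∈ A' \ A then w a b else 0 with hC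
  set C' : ℕ := ∑ a : V, ∑ b : V, if a ∈ A' \ A ∧ b ∈ A \ A' then w a b else 0 with hC'
  -- pointwise identity
  have hpt : ∀ a b : V,
      (if a ∈ A ∩ A' ∧ b ∉ A ∩ A' then w a b else 0) +
      (if a ∈ A ∪ A' ∧ b ∉ A ∪ A' then w a b else 0) +
      ((if a ∈ A \ A' ∧ b ∈ A' \ A then w a b else 0) +
       (if a ∈ A' \ A ∧ b ∈ A \ A' then w a b else 0)) =
      (if a ∈ A ∧ b ∉ A then w a b else 0) + (if a ∈ A' ∧ b ∉ A' then w a b else 0) := by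
    intro a b
    by_cases h1 : a ∈ A <;> by_cases h2 : a ∈ A' <;> by_cases h3 : b ∈ A <;>
      by_cases h4 : b ∈ A' <;>
      simp [h1, h2, h3, h4, Finset.mem_inter, Finset.mem_union, Finset.mem_sdiff]
  have key : cap w (A ∩ A') + cap w (A ∪ A') + (C + C') = cap w A + cap w A' := by
    rw [cap_eq_sum, cap_eq_sum, cap_eq_sum, cap_eq_sum, hC, hC']
    rw [← Finset.sum_add_distrib, ← Finset.sum_add_distrib, ← Finset.sum_add_distrib,
        ← Finset.sum_add_distrib]
    refine Finset.sum_congr rfl fun a _ => ?_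
    rw [← Finset.sum_add_distrib, ← Finset.sum_add_distrib, ← Finset.sum_add_distrib,
        ← Finset.sum_add_distrib]
    exact Finset.sum_congr rfl fun b _ => hpt a b
  have hCC' : C = C' := by
    rw [hC, hC', Finset.sum_comm]
    refine Finset.sum_congr rfl fun a _ => Finset.sum_congr rfl fun b _ => ?_
    rw [hsymm a b]
    simp [and_comm]
  obtain ⟨⟨hsA, htA⟩, hminA⟩ := hA
  obtain ⟨⟨hsA', htA'⟩, hminA'⟩ := hA'
  have hcut1 : IsSTCut s t (A ∩ A') := ⟨Finset.mem_inter.2 ⟨hsA, hsA'⟩,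
    fun h => htA (Finset.mem_inter.1 h).1⟩
  have hcut2 : IsSTCut s t (A ∪ A') := ⟨Finset.mem_union_left _ hsA,
    fun h => (Finset.mem_union.1 h).elim htA htA'⟩
  have h1 := hminA _ hcut1
  have h2 := hminA' _ hcut2
  have hC0 : C = 0 := by omega
  intro a ha b hb
  have := (Finset.sum_eq_zero_iff.1 hC0) a (Finset.mem_univ a)
  have := (Finset.sum_eq_zero_iff.1 this) b (Finset.mem_univ b)
  simpa [ha, hb] using this
end

section
/- Let T₁ and T₂ be valid cuts of S with T₁ ⊊ T₂. Let N₁, N₂ be tight mincuts for T₁, T₂ respectively, and let F₁, F₂ be loose mincuts for T₁, T₂ respectively. Then N₁ ⊊ N₂ and F₁ ⊊ F₂. -/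
open Finset

lemma cap_eq_sum_univ {V : Type*} [Fintype V] [DecidableEq V] (w : V → V → ℕ) (A : Finset V) :
    cap w A = ∑ u : V, ∑ v : V, if u ∈ A ∧ v ∉ A then w u v else 0 := by
  unfold cap
  rw [← Finset.sum_filter_add_sum_filter_not Finset.univ (· ∈ A)]
  have h1 : Finset.univ.filter (· ∈ A) = A := by ext x; simp
  rw [h1]
  have h2 : ∀ u ∈ A, (∑ v : V, if u ∈ A ∧ v ∉ A then w u v else 0) = ∑ b ∈ Aᶜ, w u b := by
    intro u hu
    rw [← Finset.sum_filter_add_sum_filter_not Finset.univ (· ∈ Aᶜ)]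
    have h3 : Finset.univ.filter (· ∈ Aᶜ) = Aᶜ := by ext x; simp
    rw [h3]
    have : (∑ v ∈ Finset.univ.filter (¬ · ∈ Aᶜ), if u ∈ A ∧ v ∉ A then w u v else 0) = 0 := by
      apply Finset.sum_eq_zero; intro v hv
      simp only [Finset.mem_filter, Finset.mem_compl, not_not] at hv
      simp [hv.2]
    rw [this, add_zero]
    apply Finset.sum_congr rfl
    intro v hv
    simp only [Finset.mem_compl] at hv
    simp [hu, hv]
  rw [Finset.sum_congr rfl h2]
  have : (∑ u ∈ Finset.univ.filter (¬ · ∈ A), ∑ v : V, if u ∈ A ∧ v ∉ A then w u v else 0) = 0 := by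
    apply Finset.sum_eq_zero; intro u hu
    simp only [Finset.mem_filter] at hu
    apply Finset.sum_eq_zero; intro v _
    simp [hu.2]
  rw [this, add_zero]

lemma mincut_inter_union {V : Type*} [Fintype V] [DecidableEq V] (w : V → V → ℕ)
    (S A B : Finset V) (hA : IsSMincut w S A) (hB : IsSMincut w S B)
    (hsub : A ∩ S ⊆ B ∩ S) :
    IsSMincut w S (A ∩ B) ∧ IsSMincut w S (A ∪ B) := by
  obtain ⟨⟨⟨hAne, hAnu⟩, hASne, hSAne⟩, hAmin⟩ := hA
  obtain ⟨⟨⟨hBne, hBnu⟩, hBSne, hSBne⟩, hBmin⟩ := hB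
  -- trace of intersection is A ∩ S
  have htrI : (A ∩ B) ∩ S = A ∩ S := by
    apply Finset.Subset.antisymm
    · intro x hx; simp only [Finset.mem_inter] at hx ⊢; exact ⟨hx.1.1, hx.2⟩
    · intro x hx
      have hxB : x ∈ B := (Finset.mem_inter.mp (hsub hx)).1
      simp only [Finset.mem_inter] at hx ⊢
      exact ⟨⟨hx.1, hxB⟩, hx.2⟩
  have htrU : (A ∪ B) ∩ S = B ∩ S := by
    apply Finset.Subset.antisymm
    · intro x hx
      simp only [Finset.mem_inter, Finset.mem_union] at hx ⊢
      rcases hx.1 with h | h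
      · exact ⟨(Finset.mem_inter.mp (hsub (Finset.mem_inter.mpr ⟨h, hx.2⟩))).1, hx.2⟩
      · exact ⟨h, hx.2⟩
    · intro x hx; simp only [Finset.mem_inter, Finset.mem_union] at hx ⊢
      exact ⟨Or.inr hx.1, hx.2⟩
  -- A ∩ B is an S-cut
  obtain ⟨sA, hsA⟩ := hSAne
  simp only [Finset.mem_sdiff] at hsA
  obtain ⟨sB, hsB⟩ := hSBne
  simp only [Finset.mem_sdiff] at hsB
  have hsBnA : sB ∉ A := by
    intro h
    exact hsB.2 (Finset.mem_inter.mp (hsub (Finset.mem_inter.mpr ⟨h, hsB.1⟩))).1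
  have hIcut : IsSCut S (A ∩ B) := by
    refine ⟨⟨?_, ?_⟩, ?_, ?_⟩
    · intro h
      have : (A ∩ B) ∩ S = ∅ := by rw [h]; simp
      rw [htrI] at this
      exact Finset.not_nonempty_empty (this ▸ hASne)
    · intro h
      have : sA ∈ A ∩ B := h ▸ Finset.mem_univ sA
      exact hsA.2 (Finset.mem_inter.mp this).1
    · rw [htrI]; exact hASne
    · exact ⟨sA, Finset.mem_sdiff.mpr ⟨hsA.1, fun h => hsA.2 (Finset.mem_inter.mp h).1⟩⟩
  have hUcut : IsSCut S (A ∪ B) := by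
    refine ⟨⟨?_, ?_⟩, ?_, ?_⟩
    · intro h
      have : (A ∪ B) ∩ S = ∅ := by rw [h]; simp
      rw [htrU] at this
      exact Finset.not_nonempty_empty (this ▸ hBSne)
    · intro h
      have : sB ∈ A ∪ B := h ▸ Finset.mem_univ sB
      rcases Finset.mem_union.mp this with h' | h'
      · exact hsBnA h'
      · exact hsB.2 h'
    · rw [htrU]; exact hBSne
    · refine ⟨sB, Finset.mem_sdiff.mpr ⟨hsB.1, fun h => ?_⟩⟩
      rcases Finset.mem_union.mp h with h' | h'
      · exact hsBnA h'
      · exact hsB.2 h'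
  have hIge : cap w A ≤ cap w (A ∩ B) := hAmin _ hIcut
  have hUge : cap w B ≤ cap w (A ∪ B) := hBmin _ hUcut
  have hsm := cap_submodular w A B
  have hIeq : cap w (A ∩ B) = cap w A := by omega
  have hUeq : cap w (A ∪ B) = cap w B := by omega
  exact ⟨⟨hIcut, fun C hC => hIeq ▸ hAmin C hC⟩, ⟨hUcut, fun C hC => hUeq ▸ hBmin C hC⟩⟩

/-- If valid cut `T₂` strictly dominates valid cut `T₁`, then the tight mincut of `T₂`
strictly dominates the tight mincut of `T₁`, and likewise for loose mincuts. -/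
theorem tight_loose_mincut_dominance {V : Type*} [Fintype V] [DecidableEq V]
    (w : V → V → ℕ) (hsymm : ∀ u v : V, w u v = w v u) (hloop : ∀ v : V, w v v = 0)
    (S : Finset V) (hS : 2 ≤ S.card)
    (T₁ T₂ : Finset V) (hT₁ : IsValidCut w S T₁) (hT₂ : IsValidCut w S T₂)
    (hsub : T₁ ⊂ T₂)
    (N₁ N₂ F₁ F₂ : Finset V)
    (hN₁ : IsTightMincut w S T₁ N₁) (hN₂ : IsTightMincut w S T₂ N₂)
    (hF₁ : IsLooseMincut w S T₁ F₁) (hF₂ : IsLooseMincut w S T₂ F₂) :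
    N₁ ⊂ N₂ ∧ F₁ ⊂ F₂ := by
  obtain ⟨hN₁m, hN₁t, hN₁tight⟩ := hN₁
  obtain ⟨hN₂m, hN₂t, hN₂tight⟩ := hN₂
  obtain ⟨hF₁m, hF₁t, hF₁loose⟩ := hF₁
  obtain ⟨hF₂m, hF₂t, hF₂loose⟩ := hF₂
  obtain ⟨x, hxT₂, hxT₁⟩ := Finset.exists_of_ssubset hsub
  have hsubN : N₁ ∩ S ⊆ N₂ ∩ S := by rw [hN₁t, hN₂t]; exact hsub.subset
  have hsubF : F₁ ∩ S ⊆ F₂ ∩ S := by rw [hF₁t, hF₂t]; exact hsub.subset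
  obtain ⟨hNI, _⟩ := mincut_inter_union w S N₁ N₂ hN₁m hN₂m hsubN
  obtain ⟨_, hFU⟩ := mincut_inter_union w S F₁ F₂ hF₁m hF₂m hsubF
  have htrNI : (N₁ ∩ N₂) ∩ S = T₁ := by
    rw [← hN₁t]
    apply Finset.Subset.antisymm
    · intro y hy; simp only [Finset.mem_inter] at hy ⊢; exact ⟨hy.1.1, hy.2⟩
    · intro y hy
      have : y ∈ N₂ := (Finset.mem_inter.mp (hsubN hy)).1
      simp only [Finset.mem_inter] at hy ⊢
      exact ⟨⟨hy.1, this⟩, hy.2⟩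
  have htrFU : (F₁ ∪ F₂) ∩ S = T₂ := by
    rw [← hF₂t]
    apply Finset.Subset.antisymm
    · intro y hy
      simp only [Finset.mem_inter, Finset.mem_union] at hy ⊢
      rcases hy.1 with h | h
      · exact ⟨(Finset.mem_inter.mp (hsubF (Finset.mem_inter.mpr ⟨h, hy.2⟩))).1, hy.2⟩
      · exact ⟨h, hy.2⟩
    · intro y hy; simp only [Finset.mem_inter, Finset.mem_union] at hy ⊢
      exact ⟨Or.inr hy.1, hy.2⟩
  have hNsub : N₁ ⊆ N₂ := fun y hy =>
    (Finset.mem_inter.mp (hN₁tight (N₁ ∩ N₂) hNI htrNI hy)).2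
  have hFsub : F₁ ⊆ F₂ := fun y hy =>
    hF₂loose (F₁ ∪ F₂) hFU htrFU (Finset.mem_union_left _ hy)
  have hxS : x ∈ S := by
    have : x ∈ N₂ ∩ S := hN₂t ▸ hxT₂; exact (Finset.mem_inter.mp this).2
  constructor
  · refine ⟨hNsub, fun h => hxT₁ ?_⟩
    have hxN₂ : x ∈ N₂ := by
      have : x ∈ N₂ ∩ S := hN₂t ▸ hxT₂; exact (Finset.mem_inter.mp this).1
    rw [← hN₁t]
    exact Finset.mem_inter.mpr ⟨h hxN₂, hxS⟩
  · refine ⟨hFsub, fun h => hxT₁ ?_⟩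
    have hxF₂ : x ∈ F₂ := by
      have : x ∈ F₂ ∩ S := hF₂t ▸ hxT₂; exact (Finset.mem_inter.mp this).1
    rw [← hF₁t]
    exact Finset.mem_inter.mpr ⟨h hxF₂, hxS⟩
end

section
/- Suppose G is connected. Let T₁ and T₂ be valid cuts of S that cross each other: T₁ ∩ T₂ ≠ ∅, T₁ \ T₂ ≠ ∅, T₂ \ T₁ ≠ ∅, and S \ (T₁ ∪ T₂) ≠ ∅. Let F₁, F₁', F₂, F₂' be loose mincuts for the valid cuts T₁, S \ T₁, T₂, S \ T₂ respectively. Then F₁ ∩ F₁' ∩ F₂ ∩ F₂' = ∅; in particular, no vertex lies inside all four loose mincuts. -/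
open Finset

section Aux

variable {V : Type*} [Fintype V] [DecidableEq V]

/-- Total weight of ordered pairs from `P` to `Q`. -/
def dd (w : V → V → ℕ) (P Q : Finset V) : ℕ := ∑ p ∈ P, ∑ q ∈ Q, w p q

lemma cap_eq_dd (w : V → V → ℕ) (A : Finset V) : cap w A = dd w A Aᶜ := rfl

lemma dd_eq_sum (w : V → V → ℕ) (P Q : Finset V) :
    dd w P Q = ∑ p : V, ∑ q : V, if p ∈ P ∧ q ∈ Q then w p q else 0 := by
  have h : ∀ p : V, (∑ q : V, if p ∈ P ∧ q ∈ Q then w p q else 0)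
      = if p ∈ P then ∑ q ∈ Q, w p q else 0 := by
    intro p
    by_cases hp : p ∈ P
    · simp [hp, Finset.sum_ite_mem]
    · simp [hp]
  rw [show (∑ p : V, ∑ q : V, if p ∈ P ∧ q ∈ Q then w p q else 0)
      = ∑ p : V, if p ∈ P then ∑ q ∈ Q, w p q else 0 from Finset.sum_congr rfl fun p _ => h p,
    Finset.sum_ite_mem, Finset.univ_inter]
  rfl

lemma dd_comm (w : V → V → ℕ) (hsymm : ∀ u v : V, w u v = w v u) (P Q : Finset V) :
    dd w P Q = dd w Q P := by
  unfold dd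
  rw [Finset.sum_comm]
  exact Finset.sum_congr rfl fun q _ => Finset.sum_congr rfl fun p _ => hsymm p q

lemma cap_compl (w : V → V → ℕ) (hsymm : ∀ u v : V, w u v = w v u) (C : Finset V) :
    cap w Cᶜ = cap w C := by
  calc cap w Cᶜ = dd w Cᶜ Cᶜᶜ := rfl
    _ = dd w Cᶜ C := by rw [compl_compl]
    _ = dd w C Cᶜ := dd_comm w hsymm _ _
    _ = cap w C := rfl

/-- Strengthened submodularity of the cut function. -/
lemma capS (w : V → V → ℕ) (A B : Finset V) :
    cap w (A ∩ B) + cap w (A ∪ B) + dd w (A \ B) (B \ A) + dd w (B \ A) (A \ B)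
      ≤ cap w A + cap w B := by
  have hc : ∀ C : Finset V,
      cap w C = ∑ p : V, ∑ q : V, if p ∈ C ∧ q ∈ Cᶜ then w p q else 0 :=
    fun C => dd_eq_sum w C Cᶜ
  rw [hc, hc, hc, hc, dd_eq_sum, dd_eq_sum]
  simp only [← Finset.sum_add_distrib]
  apply Finset.sum_le_sum
  intro p _
  apply Finset.sum_le_sum
  intro q _
  simp only [Finset.mem_compl, Finset.mem_inter, Finset.mem_union, Finset.mem_sdiff]
  by_cases h1 : p ∈ A <;> by_cases h2 : p ∈ B <;> by_cases h3 : q ∈ A <;> by_cases h4 : q ∈ B <;>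
    simp [h1, h2, h3, h4]

/-- Posimodularity with the cross term. -/
lemma capP (w : V → V → ℕ) (hsymm : ∀ u v : V, w u v = w v u) (A B : Finset V) :
    cap w (A \ B) + cap w (B \ A) + dd w (A ∩ B) (A ∪ B)ᶜ + dd w (A ∪ B)ᶜ (A ∩ B)
      ≤ cap w A + cap w B := by
  have h := capS w A Bᶜ
  have e1 : A ∩ Bᶜ = A \ B := by ext x; simp [Finset.mem_sdiff]
  have e2 : A ∪ Bᶜ = (B \ A)ᶜ := by ext x; simp [Finset.mem_sdiff]; tauto
  have e3 : A \ Bᶜ = A ∩ B := by ext x; simp [Finset.mem_sdiff]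
  have e4 : Bᶜ \ A = (A ∪ B)ᶜ := by ext x; simp [Finset.mem_sdiff]; tauto
  rw [e1, e2, e3, e4, cap_compl w hsymm B, cap_compl w hsymm (B \ A)] at h
  omega

lemma isSCut_of {S C : Finset V} (h1 : (C ∩ S).Nonempty) (h2 : (S \ C).Nonempty) :
    IsSCut S C := by
  refine ⟨⟨?_, ?_⟩, h1, h2⟩
  · intro h; rw [h] at h1; simp at h1
  · intro h
    obtain ⟨x, hx⟩ := h2
    rw [h] at hx
    exact (Finset.mem_sdiff.mp hx).2 (Finset.mem_univ x)

lemma inter_mincut {w : V → V → ℕ} {S A B : Finset V}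
    (hA : IsSMincut w S A) (hB : IsSMincut w S B)
    (h1 : IsSCut S (A ∩ B)) (h2 : IsSCut S (A ∪ B)) : IsSMincut w S (A ∩ B) := by
  have hs := capS w A B
  have ha := hA.2 _ h1
  have hb := hB.2 _ h2
  exact ⟨h1, fun C hC => le_trans (by omega) (hA.2 C hC)⟩

lemma wzero {w : V → V → ℕ} (hsymm : ∀ u v : V, w u v = w v u) {S A B : Finset V}
    (hA : IsSMincut w S A) (hB : IsSMincut w S B)
    (h1 : IsSCut S (A \ B)) (h2 : IsSCut S (B \ A))
    {u v : V} (hu1 : u ∈ A) (hu2 : u ∈ B) (hv1 : v ∉ A) (hv2 : v ∉ B) :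
    w u v = 0 := by
  have hP := capP w hsymm A B
  have ha := hA.2 _ h1
  have hb := hB.2 _ h2
  have hz : dd w (A ∩ B) (A ∪ B)ᶜ = 0 := by omega
  have hu : u ∈ A ∩ B := Finset.mem_inter.mpr ⟨hu1, hu2⟩
  have hv : v ∈ (A ∪ B)ᶜ := by
    rw [Finset.mem_compl, Finset.mem_union]
    tauto
  unfold dd at hz
  exact (Finset.sum_eq_zero_iff.mp ((Finset.sum_eq_zero_iff.mp hz) u hu)) v hv

lemma pairzero (w : V → V → ℕ) (hsymm : ∀ u v : V, w u v = w v u)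
    (S X X' Q TX TQ : Finset V)
    (hX : IsSMincut w S X) (hXS : X ∩ S = TX)
    (hX' : IsSMincut w S X') (hXS' : X' ∩ S = S \ TX)
    (hQ : IsSMincut w S Q) (hQS : Q ∩ S = TQ)
    (h1 : (TX ∩ TQ).Nonempty) (h2 : (TX \ TQ).Nonempty)
    (h3 : (TQ \ TX).Nonempty) (h4 : (S \ (TX ∪ TQ)).Nonempty)
    {u v : V} (hu1 : u ∈ X) (hu2 : u ∈ X') (hu3 : u ∈ Q) (hv : v ∉ Q) :
    w u v = 0 := by
  have hTXS : TX ⊆ S := by rw [← hXS]; exact Finset.inter_subset_right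
  have hTQS : TQ ⊆ S := by rw [← hQS]; exact Finset.inter_subset_right
  have mX : ∀ s, s ∈ TX → s ∈ X := by
    intro s hs; rw [← hXS] at hs; exact (Finset.mem_inter.mp hs).1
  have mXn : ∀ s, s ∈ S → s ∉ TX → s ∉ X := by
    intro s hsS hs hmem
    exact hs (by rw [← hXS]; exact Finset.mem_inter.mpr ⟨hmem, hsS⟩)
  have mX' : ∀ s, s ∈ S → s ∉ TX → s ∈ X' := by
    intro s hsS hs
    have : s ∈ X' ∩ S := by rw [hXS']; exact Finset.mem_sdiff.mpr ⟨hsS, hs⟩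
    exact (Finset.mem_inter.mp this).1
  have mX'n : ∀ s, s ∈ TX → s ∉ X' := by
    intro s hs hmem
    have : s ∈ X' ∩ S := Finset.mem_inter.mpr ⟨hmem, hTXS hs⟩
    rw [hXS'] at this
    exact (Finset.mem_sdiff.mp this).2 hs
  have mQ : ∀ s, s ∈ TQ → s ∈ Q := by
    intro s hs; rw [← hQS] at hs; exact (Finset.mem_inter.mp hs).1
  have mQn : ∀ s, s ∈ S → s ∉ TQ → s ∉ Q := by
    intro s hsS hs hmem
    exact hs (by rw [← hQS]; exact Finset.mem_inter.mpr ⟨hmem, hsS⟩)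
  obtain ⟨s1, hs1⟩ := h1
  obtain ⟨s2, hs2⟩ := h2
  obtain ⟨s3, hs3⟩ := h3
  obtain ⟨s4, hs4⟩ := h4
  obtain ⟨s1TX, s1TQ⟩ := Finset.mem_inter.mp hs1
  obtain ⟨s2TX, s2TQ⟩ := Finset.mem_sdiff.mp hs2
  obtain ⟨s3TQ, s3TX⟩ := Finset.mem_sdiff.mp hs3
  obtain ⟨s4S, s4T⟩ := Finset.mem_sdiff.mp hs4
  rw [Finset.mem_union] at s4T
  push_neg at s4T
  obtain ⟨s4TX, s4TQ⟩ := s4T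
  have s1S : s1 ∈ S := hTXS s1TX
  have s2S : s2 ∈ S := hTXS s2TX
  have s3S : s3 ∈ S := hTQS s3TQ
  have s1X := mX s1 s1TX
  have s1Q := mQ s1 s1TQ
  have s1X' := mX'n s1 s1TX
  have s2X := mX s2 s2TX
  have s2Q := mQn s2 s2S s2TQ
  have s2X' := mX'n s2 s2TX
  have s3X := mXn s3 s3S s3TX
  have s3Q := mQ s3 s3TQ
  have s3X' := mX' s3 s3S s3TX
  have s4X := mXn s4 s4S s4TX
  have s4Q := mQn s4 s4S s4TQ
  have s4X' := mX' s4 s4S s4TX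
  have minA : IsSMincut w S (X ∩ Q) := by
    refine inter_mincut hX hQ (isSCut_of ⟨s1, ?_⟩ ⟨s3, ?_⟩) (isSCut_of ⟨s1, ?_⟩ ⟨s4, ?_⟩)
    · exact Finset.mem_inter.mpr ⟨Finset.mem_inter.mpr ⟨s1X, s1Q⟩, s1S⟩
    · exact Finset.mem_sdiff.mpr ⟨s3S, fun h => s3X (Finset.mem_inter.mp h).1⟩
    · exact Finset.mem_inter.mpr ⟨Finset.mem_union_left _ s1X, s1S⟩
    · refine Finset.mem_sdiff.mpr ⟨s4S, fun h => ?_⟩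
      rcases Finset.mem_union.mp h with h | h
      exacts [s4X h, s4Q h]
  have minB : IsSMincut w S (X' ∩ Q) := by
    refine inter_mincut hX' hQ (isSCut_of ⟨s3, ?_⟩ ⟨s1, ?_⟩) (isSCut_of ⟨s3, ?_⟩ ⟨s2, ?_⟩)
    · exact Finset.mem_inter.mpr ⟨Finset.mem_inter.mpr ⟨s3X', s3Q⟩, s3S⟩
    · exact Finset.mem_sdiff.mpr ⟨s1S, fun h => s1X' (Finset.mem_inter.mp h).1⟩
    · exact Finset.mem_inter.mpr ⟨Finset.mem_union_left _ s3X', s3S⟩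
    · refine Finset.mem_sdiff.mpr ⟨s2S, fun h => ?_⟩
      rcases Finset.mem_union.mp h with h | h
      exacts [s2X' h, s2Q h]
  have cutAB : IsSCut S ((X ∩ Q) \ (X' ∩ Q)) := by
    refine isSCut_of ⟨s1, ?_⟩ ⟨s3, ?_⟩
    · refine Finset.mem_inter.mpr ⟨Finset.mem_sdiff.mpr ⟨Finset.mem_inter.mpr ⟨s1X, s1Q⟩,
        fun h => s1X' (Finset.mem_inter.mp h).1⟩, s1S⟩
    · exact Finset.mem_sdiff.mpr ⟨s3S, fun h =>
        s3X (Finset.mem_inter.mp (Finset.mem_sdiff.mp h).1).1⟩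
  have cutBA : IsSCut S ((X' ∩ Q) \ (X ∩ Q)) := by
    refine isSCut_of ⟨s3, ?_⟩ ⟨s1, ?_⟩
    · refine Finset.mem_inter.mpr ⟨Finset.mem_sdiff.mpr ⟨Finset.mem_inter.mpr ⟨s3X', s3Q⟩,
        fun h => s3X (Finset.mem_inter.mp h).1⟩, s3S⟩
    · exact Finset.mem_sdiff.mpr ⟨s1S, fun h =>
        s1X' (Finset.mem_inter.mp (Finset.mem_sdiff.mp h).1).1⟩
  refine wzero hsymm minA minB cutAB cutBA
    (Finset.mem_inter.mpr ⟨hu1, hu3⟩) (Finset.mem_inter.mpr ⟨hu2, hu3⟩)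
    (fun h => hv (Finset.mem_inter.mp h).2) (fun h => hv (Finset.mem_inter.mp h).2)

lemma walk_boundary {G : SimpleGraph V} (Z : Finset V) {u v : V} (p : G.Walk u v) :
    u ∈ Z → v ∉ Z → ∃ a b, a ∈ Z ∧ b ∉ Z ∧ G.Adj a b := by
  induction p with
  | nil => intro h h'; exact absurd h h'
  | @cons a b c hadj p ih =>
    intro hu hv
    by_cases hb : b ∈ Z
    · exact ih hb hv
    · exact ⟨a, b, hu, hb, hadj⟩

end Aux

/-- If `T₁` and `T₂` are crossing valid cuts of `S` (in a connected graph), then the four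
loose mincuts for `T₁`, `S \ T₁`, `T₂`, `S \ T₂` have empty common intersection. -/
theorem no_unit_distinguished_by_crossing_cuts {V : Type*} [Fintype V] [DecidableEq V]
    (w : V → V → ℕ) (hsymm : ∀ u v : V, w u v = w v u) (hloop : ∀ v : V, w v v = 0)
    (hconn : (SimpleGraph.fromRel (fun u v : V => 0 < w u v)).Connected)
    (S : Finset V) (hS : 2 ≤ S.card)
    (T₁ T₂ : Finset V) (hT₁ : IsValidCut w S T₁) (hT₂ : IsValidCut w S T₂)
    (hc₁ : (T₁ ∩ T₂).Nonempty) (hc₂ : (T₁ \ T₂).Nonempty)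
    (hc₃ : (T₂ \ T₁).Nonempty) (hc₄ : (S \ (T₁ ∪ T₂)).Nonempty)
    (F₁ F₁' F₂ F₂' : Finset V)
    (hF₁ : IsLooseMincut w S T₁ F₁) (hF₁' : IsLooseMincut w S (S \ T₁) F₁')
    (hF₂ : IsLooseMincut w S T₂ F₂) (hF₂' : IsLooseMincut w S (S \ T₂) F₂') :
    F₁ ∩ F₁' ∩ F₂ ∩ F₂' = ∅ := by
  obtain ⟨h1m, h1t, -⟩ := hF₁
  obtain ⟨h1m', h1t', -⟩ := hF₁'
  obtain ⟨h2m, h2t, -⟩ := hF₂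
  obtain ⟨h2m', h2t', -⟩ := hF₂'
  have hT1S : T₁ ⊆ S := by rw [← h1t]; exact Finset.inter_subset_right
  have hT2S : T₂ ⊆ S := by rw [← h2t]; exact Finset.inter_subset_right
  -- key: no edge leaves Z := F₁ ∩ F₁' ∩ F₂ ∩ F₂'
  have key : ∀ a ∈ F₁ ∩ F₁' ∩ F₂ ∩ F₂', ∀ b ∉ F₁ ∩ F₁' ∩ F₂ ∩ F₂', w a b = 0 := by
    intro a ha b hb
    simp only [Finset.mem_inter] at ha
    obtain ⟨⟨⟨ha1, ha1'⟩, ha2⟩, ha2'⟩ := ha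
    by_cases hb1 : b ∈ F₁
    · by_cases hb1' : b ∈ F₁'
      · by_cases hb2 : b ∈ F₂
        · by_cases hb2' : b ∈ F₂'
          · exact absurd (by simp only [Finset.mem_inter]; exact ⟨⟨⟨hb1, hb1'⟩, hb2⟩, hb2'⟩) hb
          · -- b ∉ F₂' : pair (F₁ ∩ F₂', F₁' ∩ F₂')
            refine pairzero w hsymm S F₁ F₁' F₂' T₁ (S \ T₂) h1m h1t h1m' h1t' h2m' h2t'
              ?_ ?_ ?_ ?_ ha1 ha1' ha2' hb2'
            · obtain ⟨s, hs⟩ := hc₂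
              obtain ⟨hsa, hsb⟩ := Finset.mem_sdiff.mp hs
              exact ⟨s, Finset.mem_inter.mpr ⟨hsa, Finset.mem_sdiff.mpr ⟨hT1S hsa, hsb⟩⟩⟩
            · obtain ⟨s, hs⟩ := hc₁
              obtain ⟨hsa, hsb⟩ := Finset.mem_inter.mp hs
              exact ⟨s, Finset.mem_sdiff.mpr ⟨hsa, fun h => (Finset.mem_sdiff.mp h).2 hsb⟩⟩
            · obtain ⟨s, hs⟩ := hc₄
              obtain ⟨hsa, hsb⟩ := Finset.mem_sdiff.mp hs
              rw [Finset.mem_union] at hsb; push_neg at hsb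
              exact ⟨s, Finset.mem_sdiff.mpr ⟨Finset.mem_sdiff.mpr ⟨hsa, hsb.2⟩, hsb.1⟩⟩
            · obtain ⟨s, hs⟩ := hc₃
              obtain ⟨hsa, hsb⟩ := Finset.mem_sdiff.mp hs
              refine ⟨s, Finset.mem_sdiff.mpr ⟨hT2S hsa, fun h => ?_⟩⟩
              rcases Finset.mem_union.mp h with h | h
              exacts [hsb h, (Finset.mem_sdiff.mp h).2 hsa]
        · -- b ∉ F₂ : pair (F₁ ∩ F₂, F₁' ∩ F₂)
          exact pairzero w hsymm S F₁ F₁' F₂ T₁ T₂ h1m h1t h1m' h1t' h2m h2t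
            hc₁ hc₂ hc₃ hc₄ ha1 ha1' ha2 hb2
      · -- b ∉ F₁' : pair (F₂ ∩ F₁', F₂' ∩ F₁')
        refine pairzero w hsymm S F₂ F₂' F₁' T₂ (S \ T₁) h2m h2t h2m' h2t' h1m' h1t'
          ?_ ?_ ?_ ?_ ha2 ha2' ha1' hb1'
        · obtain ⟨s, hs⟩ := hc₃
          obtain ⟨hsa, hsb⟩ := Finset.mem_sdiff.mp hs
          exact ⟨s, Finset.mem_inter.mpr ⟨hsa, Finset.mem_sdiff.mpr ⟨hT2S hsa, hsb⟩⟩⟩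
        · obtain ⟨s, hs⟩ := hc₁
          obtain ⟨hsa, hsb⟩ := Finset.mem_inter.mp hs
          exact ⟨s, Finset.mem_sdiff.mpr ⟨hsb, fun h => (Finset.mem_sdiff.mp h).2 hsa⟩⟩
        · obtain ⟨s, hs⟩ := hc₄
          obtain ⟨hsa, hsb⟩ := Finset.mem_sdiff.mp hs
          rw [Finset.mem_union] at hsb; push_neg at hsb
          exact ⟨s, Finset.mem_sdiff.mpr ⟨Finset.mem_sdiff.mpr ⟨hsa, hsb.1⟩, hsb.2⟩⟩
        · obtain ⟨s, hs⟩ := hc₂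
          obtain ⟨hsa, hsb⟩ := Finset.mem_sdiff.mp hs
          refine ⟨s, Finset.mem_sdiff.mpr ⟨hT1S hsa, fun h => ?_⟩⟩
          rcases Finset.mem_union.mp h with h | h
          exacts [hsb h, (Finset.mem_sdiff.mp h).2 hsa]
    · -- b ∉ F₁ : pair (F₂ ∩ F₁, F₂' ∩ F₁)
      refine pairzero w hsymm S F₂ F₂' F₁ T₂ T₁ h2m h2t h2m' h2t' h1m h1t
        ?_ hc₃ hc₂ ?_ ha2 ha2' ha1 hb1
      · rwa [Finset.inter_comm] at hc₁
      · rwa [Finset.union_comm] at hc₄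
  -- connectivity: Z must be empty
  by_contra hne
  obtain ⟨x, hx⟩ := Finset.nonempty_iff_ne_empty.mpr hne
  obtain ⟨s0, hs0⟩ := hc₁
  obtain ⟨hs0a, hs0b⟩ := Finset.mem_inter.mp hs0
  have hs0F2' : s0 ∉ F₂' := by
    intro h
    have : s0 ∈ F₂' ∩ S := Finset.mem_inter.mpr ⟨h, hT2S hs0b⟩
    rw [h2t'] at this
    exact (Finset.mem_sdiff.mp this).2 hs0b
  have hs0Z : s0 ∉ F₁ ∩ F₁' ∩ F₂ ∩ F₂' := fun h => hs0F2' (Finset.mem_inter.mp h).2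
  obtain ⟨p⟩ := hconn.preconnected x s0
  obtain ⟨a, b, ha, hb, hadj⟩ := walk_boundary (F₁ ∩ F₁' ∩ F₂ ∩ F₂') p hx hs0Z
  rw [SimpleGraph.fromRel_adj] at hadj
  have hab := key a ha b hb
  have hba : w b a = 0 := by rw [hsymm b a]; exact hab
  rcases hadj.2 with h | h <;> omega
end
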